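/- Let κ > 4, h_κ = (6-κ)/(2κ), χ = √κ/2 - 2/√κ. Define Z(x) = ∏_{1≤i<j≤N} |x_i - x_j|^{2/κ} on Conf_N(ℝ) (N ≥ 2), ũ(z; x) = (2/√κ) Σ_{j=1}^N Log(z - x_j) for z ∈ H (principal branch), X(z; x) = ũ(z; x) Z(x), and the operator D_{z,i}^κ = (κ/2)∂_{x_i}² + 2 Σ_{j≠i}( (1/(x_j - x_i)) ∂_{x_j} - h_κ/(x_j - x_i)² ) + (2/(z - x_i)) ∂_z. Then for every i, z ∈ H, and x ∈ Conf_N(ℝ): (D_{z,i}^κ X)(z; x) + (2χ/(z - x_i)²) Z(x) = 0. -/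

import Mathlib

/-!
Write `X = ũ Z`. By the Leibniz rule, `D_{z,i} X` is `ũ` times the null-vector operator applied to
`Z`, plus terms linear in `Z`. The first part vanishes: near a configuration
`Z = exp ((2/κ) ∑_{i<j} log (x_i - x_j))`, so `∂_i Z = (2/κ) Z ∑_{k≠i} 1/(x_i - x_k)`, and after
dividing by `Z` the null-vector equation reduces, thanks to `h_κ = (6-κ)/(2κ)`, to the
partial-fraction identity `1/((a-b)(a-c)) + 1/((b-a)(b-c)) + 1/((c-a)(c-b)) = 0`. In the remaining
part the terms with `j ≠ i` cancel by the same kind of partial-fraction identity, and what is left,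
`(2/√κ) (2 - κ/2) / (z - x_i)² Z = -2χ / (z - x_i)² Z`, is cancelled by the last term.
-/

open Finset Function Filter Topology

theorem sum_sum_lt_single_sub_single_div {ι K : Type*} [Fintype ι] [LinearOrder ι] [Field K]
    (v : ι → K) (m : ι) :
    ∑ i, ∑ j ∈ univ.filter (i < ·),
        ((Pi.single m 1 : ι → K) i - (Pi.single m 1 : ι → K) j) / (v i - v j)
      = ∑ k ∈ univ.erase m, (v m - v k)⁻¹ := by
  have hout : ∑ i, ∑ j ∈ univ.filter (i < ·), (Pi.single m 1 : ι → K) i / (v i - v j)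
      = ∑ k, if m < k then (v m - v k)⁻¹ else 0 := by
    rw [Fintype.sum_eq_single m fun i hi => by simp [hi], sum_filter]
    simp
  have hin : ∑ i, ∑ j ∈ univ.filter (i < ·), (Pi.single m 1 : ι → K) j / (v i - v j)
      = ∑ k, if k < m then (v k - v m)⁻¹ else 0 := by
    refine Fintype.sum_congr _ _ fun k => ?_
    rw [sum_filter, Fintype.sum_eq_single m fun j hj => by simp [hj]]
    simp
  rw [← filter_ne', sum_filter]
  simp only [sub_div, sum_sub_distrib]
  rw [hout, hin, ← sum_sub_distrib]
  refine Fintype.sum_congr _ _ fun k => ?_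
  rcases lt_trichotomy k m with h | rfl | h
  · rw [← neg_sub (v m) (v k), inv_neg]; simp [h, h.ne, h.not_gt]
  · simp
  · simp [h, h.ne', h.not_gt]

theorem sq_sum_eq_sum_sq_add_sum_sum_erase {ι R : Type*} [DecidableEq ι] [CommSemiring R]
    (s : Finset ι) (f : ι → R) :
    (∑ j ∈ s, f j) ^ 2 = ∑ j ∈ s, f j ^ 2 + ∑ j ∈ s, ∑ k ∈ s.erase j, f j * f k := by
  rw [sq, sum_mul_sum, ← sum_add_distrib]
  exact sum_congr rfl fun j hj => by rw [← add_sum_erase s _ hj, sq]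

theorem sum_sum_erase_comm {ι M : Type*} [DecidableEq ι] [AddCommMonoid M] (s : Finset ι)
    (g : ι → ι → M) :
    ∑ j ∈ s, ∑ k ∈ s.erase j, g j k = ∑ j ∈ s, ∑ k ∈ s.erase j, g k j :=
  sum_comm' fun j k => by simp only [mem_erase]; tauto

theorem isOpen_setOf_injective {ι X : Type*} [Finite ι] [TopologicalSpace X] [T2Space X] :
    IsOpen {f : ι → X | Injective f} := by
  have : {f : ι → X | Injective f} = ⋂ i, ⋂ j, {f | f i = f j → i = j} := by
    ext f; simp [Injective]
  rw [this]
  refine isOpen_iInter_of_finite fun i => isOpen_iInter_of_finite fun j => ?_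
  by_cases hij : i = j
  · simp [hij]
  · simpa [hij] using isOpen_ne_fun (continuous_apply i) (continuous_apply j)

theorem eventually_injective_update {ι X : Type*} [Finite ι] [DecidableEq ι] [TopologicalSpace X]
    [T2Space X] {y : ι → X} {m : ι} {t : X} (h : Injective (update y m t)) :
    ∀ᶠ s in 𝓝 t, Injective (update y m s) :=
  (continuous_const.update m continuous_id).continuousAt.preimage_mem_nhds
    (isOpen_setOf_injective.mem_nhds h)

theorem hasDerivAt_sum_comp_update {ι 𝕜 E : Type*} [Fintype ι] [DecidableEq ι]
    [NontriviallyNormedField 𝕜] [NormedAddCommGroup E] [NormedSpace 𝕜 E]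
    {g : 𝕜 → E} {g' : E} (y : ι → 𝕜) (m : ι) {t : 𝕜} (hg : HasDerivAt g g' t) :
    HasDerivAt (fun s => ∑ j, g (update y m s j)) g' t := by
  simp only [← comp_apply (f := g), comp_update, sum_update_of_mem (mem_univ m)]
  exact hg.add_const _

theorem sub_ofReal_mem_slitPlane {z : ℂ} (hz : z.im ≠ 0) (t : ℝ) : z - t ∈ Complex.slitPlane :=
  Complex.mem_slitPlane_iff.2 (Or.inr (by simpa using hz))

noncomputable def vandermondeRpow {ι : Type*} [Fintype ι] [LinearOrder ι] (p : ℝ) (y : ι → ℝ) : ℝ :=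
  ∏ i, ∏ j ∈ univ.filter (fun j => i < j), |y i - y j| ^ p

noncomputable def logPotential {ι : Type*} [Fintype ι] (c z : ℂ) (y : ι → ℝ) : ℂ :=
  c * ∑ j, Complex.log (z - y j)

noncomputable def couplingObservable {ι : Type*} [Fintype ι] [LinearOrder ι] (c : ℂ) (p : ℝ)
    (z : ℂ) (y : ι → ℝ) : ℂ :=
  logPotential c z y * vandermondeRpow p y

section VandermondeRpow

variable {ι : Type*} [Fintype ι] [LinearOrder ι]

theorem vandermondeRpow_eq_exp (p : ℝ) {y : ι → ℝ} (hy : Injective y) :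
    vandermondeRpow p y = Real.exp (p * ∑ i, ∑ j ∈ univ.filter (i < ·), Real.log (y i - y j)) := by
  simp only [vandermondeRpow, mul_sum, Real.exp_sum]
  refine prod_congr rfl fun i _ => prod_congr rfl fun j hj => ?_
  have hij : y i - y j ≠ 0 := sub_ne_zero.2 (hy.ne (mem_filter.1 hj).2.ne)
  -- `Real.log` is even, so the absolute value can be dropped inside it.
  rw [Real.rpow_def_of_pos (abs_pos.2 hij), Real.log_abs, mul_comm]

theorem hasDerivAt_vandermondeRpow_update (p : ℝ) {y : ι → ℝ} {m : ι} {t : ℝ}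
    (h : Injective (update y m t)) :
    HasDerivAt (fun s => vandermondeRpow p (update y m s))
      (vandermondeRpow p (update y m t) * (p * ∑ k ∈ univ.erase m, (t - y k)⁻¹)) t := by
  set v := update y m t
  have hcoord (i : ι) : HasDerivAt (fun s => update y m s i) ((Pi.single m 1 : ι → ℝ) i) t :=
    hasDerivAt_pi.1 (hasDerivAt_update y m t) i
  have hlog : HasDerivAt (fun s => ∑ i, ∑ j ∈ univ.filter (i < ·),
      Real.log (update y m s i - update y m s j))
      (∑ i, ∑ j ∈ univ.filter (i < ·),
        ((Pi.single m 1 : ι → ℝ) i - (Pi.single m 1 : ι → ℝ) j) / (v i - v j)) t :=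
    HasDerivAt.fun_sum fun i _ => HasDerivAt.fun_sum fun j hj =>
      ((hcoord i).sub (hcoord j)).log (sub_ne_zero.2 (h.ne (mem_filter.1 hj).2.ne))
  have hsum : ∑ k ∈ univ.erase m, (v m - v k)⁻¹ = ∑ k ∈ univ.erase m, (t - y k)⁻¹ :=
    sum_congr rfl fun k hk => by simp [v, update_of_ne (ne_of_mem_erase hk)]
  rw [sum_sum_lt_single_sub_single_div, hsum] at hlog
  rw [vandermondeRpow_eq_exp p h]
  refine (hlog.const_mul p).exp.congr_of_eventuallyEq ?_
  filter_upwards [eventually_injective_update h] with s hs using vandermondeRpow_eq_exp p hs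

end VandermondeRpow

section LogPotential

variable {ι : Type*} [Fintype ι] {c z : ℂ}

theorem hasDerivAt_logPotential_update [DecidableEq ι] (hz : z.im ≠ 0) (y : ι → ℝ) (m : ι)
    (t : ℝ) : HasDerivAt (fun s => logPotential c z (update y m s)) (-(c / (z - t))) t := by
  have hlog : HasDerivAt (fun s : ℝ => Complex.log (z - s)) (-1 / (z - t)) t :=
    (Complex.ofRealCLM.hasDerivAt.const_sub z).clog_real (sub_ofReal_mem_slitPlane hz t)
  simpa [logPotential, neg_div, mul_neg, div_eq_mul_inv] using
    (hasDerivAt_sum_comp_update y m hlog).const_mul c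

theorem hasDerivAt_logPotential (hz : z.im ≠ 0) (y : ι → ℝ) :
    HasDerivAt (fun w => logPotential c w y) (c * ∑ j, (z - y j)⁻¹) z := by
  refine (HasDerivAt.fun_sum fun j _ => ?_).const_mul c
  simpa using ((hasDerivAt_id z).sub_const _).clog (sub_ofReal_mem_slitPlane hz (y j))

end LogPotential

section CouplingObservable

variable {ι : Type*} [Fintype ι] [LinearOrder ι] {c z : ℂ} {p : ℝ}

theorem hasDerivAt_couplingObservable_update (hz : z.im ≠ 0) {y : ι → ℝ} {m : ι} {t : ℝ}
    (h : Injective (update y m t)) :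
    HasDerivAt (fun s => couplingObservable c p z (update y m s))
      ((-(c / (z - t))
          + logPotential c z (update y m t) * (p * ∑ k ∈ univ.erase m, ((t : ℂ) - y k)⁻¹))
        * vandermondeRpow p (update y m t)) t := by
  refine ((hasDerivAt_logPotential_update hz y m t).mul
    (hasDerivAt_vandermondeRpow_update p h).ofReal_comp).congr_deriv ?_
  push_cast
  ring

theorem hasDerivAt_couplingObservable (hz : z.im ≠ 0) (y : ι → ℝ) :
    HasDerivAt (fun w => couplingObservable c p w y)
      ((c * ∑ j, (z - y j)⁻¹) * vandermondeRpow p y) z :=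
  (hasDerivAt_logPotential hz y).mul_const _

theorem deriv_couplingObservable_update (hz : z.im ≠ 0) {y : ι → ℝ} (hy : Injective y) (m : ι) :
    deriv (fun s => couplingObservable c p z (update y m s)) (y m)
      = (-(c / (z - y m)) + logPotential c z y * (p * ∑ k ∈ univ.erase m, ((y m : ℂ) - y k)⁻¹))
        * vandermondeRpow p y := by
  have h := hasDerivAt_couplingObservable_update (c := c) (p := p) hz
    (show Injective (update y m (y m)) by rwa [update_eq_self])
  rw [update_eq_self] at h
  exact h.deriv

theorem deriv_deriv_couplingObservable_update (hz : z.im ≠ 0) {y : ι → ℝ} (hy : Injective y)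
    (m : ι) :
    deriv (deriv (fun s => couplingObservable c p z (update y m s))) (y m)
      = (logPotential c z y * ((p * ∑ k ∈ univ.erase m, ((y m : ℂ) - y k)⁻¹) ^ 2
            - p * ∑ k ∈ univ.erase m, (((y m : ℂ) - y k) ^ 2)⁻¹)
          - 2 * (c / (z - y m)) * (p * ∑ k ∈ univ.erase m, ((y m : ℂ) - y k)⁻¹)
          - c / (z - y m) ^ 2) * vandermondeRpow p y := by
  have hy' : Injective (update y m (y m)) := by rwa [update_eq_self]
  have hderiv : deriv (fun s => couplingObservable c p z (update y m s)) =ᶠ[𝓝 (y m)]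
      fun t => (-(c / (z - t)) + logPotential c z (update y m t)
        * (p * ∑ k ∈ univ.erase m, ((t : ℂ) - y k)⁻¹)) * vandermondeRpow p (update y m t) := by
    filter_upwards [eventually_injective_update hy'] with t ht
    exact (hasDerivAt_couplingObservable_update hz ht).deriv
  have hpole : HasDerivAt (fun t : ℝ => -(c / (z - t))) (-(c / (z - y m) ^ 2)) (y m) := by
    have hne : z - y m ≠ 0 := Complex.slitPlane_ne_zero (sub_ofReal_mem_slitPlane hz (y m))
    simpa [div_eq_mul_inv] using ((HasDerivAt.inv (c := fun w : ℂ => z - w)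
      ((hasDerivAt_id (y m : ℂ)).const_sub z) hne).const_mul c).neg.comp_ofReal
  have hsum : HasDerivAt (fun t : ℝ => ∑ k ∈ univ.erase m, ((t : ℂ) - y k)⁻¹)
      (-∑ k ∈ univ.erase m, (((y m : ℂ) - y k) ^ 2)⁻¹) (y m) := by
    rw [← sum_neg_distrib]
    refine HasDerivAt.fun_sum fun k hk => ?_
    have hne : (y m : ℂ) - y k ≠ 0 :=
      sub_ne_zero.2 (by exact_mod_cast hy.ne (ne_of_mem_erase hk).symm)
    simpa [neg_div] using (HasDerivAt.inv (c := fun w : ℂ => w - y k)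
      ((hasDerivAt_id (y m : ℂ)).sub_const _) hne).comp_ofReal
  rw [hderiv.deriv_eq]
  refine ((hpole.fun_add ((hasDerivAt_logPotential_update hz y m (y m)).fun_mul
    (hsum.const_mul (p : ℂ)))).fun_mul
      (hasDerivAt_vandermondeRpow_update p hy').ofReal_comp).deriv.trans ?_
  simp only [update_eq_self]
  push_cast
  ring

end CouplingObservable

theorem inv_sub_mul_inv_sub_add_cyclic {K : Type*} [Field K] {a b c : K} (hab : a ≠ b) (hac : a ≠ c)
    (hbc : b ≠ c) :
    (a - b)⁻¹ * (a - c)⁻¹ + (b - a)⁻¹ * (b - c)⁻¹ + (c - a)⁻¹ * (c - b)⁻¹ = 0 := by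
  field_simp [sub_ne_zero.2 hab, sub_ne_zero.2 hac, sub_ne_zero.2 hbc, sub_ne_zero.2 hab.symm,
    sub_ne_zero.2 hac.symm, sub_ne_zero.2 hbc.symm]
  ring

section Algebra

variable {ι K : Type*} [Fintype ι] [DecidableEq ι] [Field K] [CharZero K] {y : ι → K}

theorem nullVector_identity (hy : Injective y) {κ : K} (hκ : κ ≠ 0) (i : ι) :
    κ / 2 * ((2 / κ * ∑ k ∈ univ.erase i, (y i - y k)⁻¹) ^ 2
        - 2 / κ * ∑ k ∈ univ.erase i, ((y i - y k) ^ 2)⁻¹)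
      + 2 * ∑ j ∈ univ.erase i, ((2 / κ * ∑ k ∈ univ.erase j, (y j - y k)⁻¹) / (y j - y i)
        - (6 - κ) / (2 * κ) / (y j - y i) ^ 2) = 0 := by
  have hi {j : ι} (hj : j ∈ univ.erase i) : j ≠ i := ne_of_mem_erase hj
  set A := ∑ j ∈ univ.erase i, ((y i - y j) ^ 2)⁻¹
  set D₁ := ∑ j ∈ univ.erase i, ∑ k ∈ (univ.erase i).erase j, (y i - y j)⁻¹ * (y i - y k)⁻¹
  set D₂ := ∑ j ∈ univ.erase i, ∑ k ∈ (univ.erase i).erase j, (y j - y i)⁻¹ * (y j - y k)⁻¹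
  have hsq : (∑ k ∈ univ.erase i, (y i - y k)⁻¹) ^ 2 = A + D₁ := by
    simp only [A, D₁, sq_sum_eq_sum_sq_add_sum_sum_erase, inv_pow]
  have hneighbours : ∑ j ∈ univ.erase i, ((2 / κ * ∑ k ∈ univ.erase j, (y j - y k)⁻¹) / (y j - y i)
      - (6 - κ) / (2 * κ) / (y j - y i) ^ 2) = (2 / κ - (6 - κ) / (2 * κ)) * A + 2 / κ * D₂ := by
    rw [mul_sum, mul_sum, ← sum_add_distrib]
    refine sum_congr rfl fun j hj => ?_
    rw [← add_sum_erase _ _ (mem_erase.2 ⟨(hi hj).symm, mem_univ i⟩), erase_right_comm, ← mul_sum]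
    have := sub_ne_zero.2 (hy.ne (hi hj))
    have := sub_ne_zero.2 (hy.ne (hi hj).symm)
    field_simp
    ring
  have hcyclic : D₁ + 2 * D₂ = 0 := by
    have hswap : D₂ = ∑ j ∈ univ.erase i, ∑ k ∈ (univ.erase i).erase j,
        (y k - y i)⁻¹ * (y k - y j)⁻¹ := sum_sum_erase_comm _ _
    rw [two_mul]
    nth_rewrite 2 [hswap]
    simp only [D₁, D₂, ← sum_add_distrib]
    refine sum_eq_zero fun j hj => sum_eq_zero fun k hk => ?_
    linear_combination inv_sub_mul_inv_sub_add_cyclic (hy.ne (hi hj).symm)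
      (hy.ne (hi (mem_of_mem_erase hk)).symm) (hy.ne (ne_of_mem_erase hk).symm)
  rw [hneighbours, mul_pow, hsq]
  field_simp
  linear_combination 2 * hcyclic

theorem coupling_remainder_identity (hy : Injective y) {z : K} (hz : ∀ j, z - y j ≠ 0) {κ s : K}
    (hs : s ≠ 0) (hsκ : s ^ 2 = κ) (i : ι) :
    κ / 2 * (-(2 * (2 / s / (z - y i)) * (2 / κ * ∑ k ∈ univ.erase i, (y i - y k)⁻¹))
        - 2 / s / (z - y i) ^ 2)
      + 2 * ∑ j ∈ univ.erase i, (-(2 / s / (z - y j)) / (y j - y i))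
      + 2 / (z - y i) * (2 / s * ∑ j, (z - y j)⁻¹)
      + 2 * (s / 2 - 2 / s) / (z - y i) ^ 2 = 0 := by
  subst hsκ
  have hzi := hz i
  have hpair : ∑ j ∈ univ.erase i, (-(4 / s / (z - y i)) * (y i - y j)⁻¹
      + 2 * (-(2 / s / (z - y j)) / (y j - y i)) + 4 / s / (z - y i) * (z - y j)⁻¹) = 0 := by
    refine sum_eq_zero fun j hj => ?_
    have hji := sub_ne_zero.2 (hy.ne (ne_of_mem_erase hj))
    have hij := sub_ne_zero.2 (hy.ne (ne_of_mem_erase hj).symm)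
    have hzj := hz j
    field_simp
    ring
  simp only [sum_add_distrib, ← mul_sum] at hpair
  rw [← add_sum_erase _ _ (mem_univ i)]
  generalize ∑ k ∈ univ.erase i, (y i - y k)⁻¹ = R at *
  generalize ∑ j ∈ univ.erase i, -(2 / s / (z - y j)) / (y j - y i) = G at *
  generalize ∑ j ∈ univ.erase i, (z - y j)⁻¹ = W at *
  generalize z - y i = w at *
  field_simp at hpair ⊢
  linear_combination w * hpair

/-- The left-hand side of the theorem after substituting the derivatives of `X = U V`, where
`U = ũ(z; y)` and `V = Z(y)`. -/
theorem forward_coupling_algebraic_identity (hy : Injective y) {z : K} (hz : ∀ j, z - y j ≠ 0)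
    {κ s : K} (hs : s ≠ 0) (hsκ : s ^ 2 = κ) (U V : K) (i : ι) :
    κ / 2 * ((U * ((2 / κ * ∑ k ∈ univ.erase i, (y i - y k)⁻¹) ^ 2
            - 2 / κ * ∑ k ∈ univ.erase i, ((y i - y k) ^ 2)⁻¹)
          - 2 * (2 / s / (z - y i)) * (2 / κ * ∑ k ∈ univ.erase i, (y i - y k)⁻¹)
          - 2 / s / (z - y i) ^ 2) * V)
      + 2 * ∑ j ∈ univ.filter (· ≠ i),
          (1 / (y j - y i) * ((-(2 / s / (z - y j))
              + U * (2 / κ * ∑ k ∈ univ.erase j, (y j - y k)⁻¹)) * V)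
            - (6 - κ) / (2 * κ) / (y j - y i) ^ 2 * (U * V))
      + 2 / (z - y i) * ((2 / s * ∑ j, (z - y j)⁻¹) * V)
      + 2 * (s / 2 - 2 / s) / (z - y i) ^ 2 * V = 0 := by
  have hκ : κ ≠ 0 := hsκ ▸ pow_ne_zero 2 hs
  have hsplit : ∑ j ∈ univ.erase i,
      (1 / (y j - y i) * ((-(2 / s / (z - y j))
          + U * (2 / κ * ∑ k ∈ univ.erase j, (y j - y k)⁻¹)) * V)
        - (6 - κ) / (2 * κ) / (y j - y i) ^ 2 * (U * V))
      = U * V * ∑ j ∈ univ.erase i, ((2 / κ * ∑ k ∈ univ.erase j, (y j - y k)⁻¹) / (y j - y i)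
          - (6 - κ) / (2 * κ) / (y j - y i) ^ 2)
        + V * ∑ j ∈ univ.erase i, (-(2 / s / (z - y j)) / (y j - y i)) := by
    rw [mul_sum, mul_sum, ← sum_add_distrib]
    exact sum_congr rfl fun j _ => by ring
  rw [filter_ne', hsplit]
  linear_combination (U * V) * nullVector_identity hy hκ i
    + V * coupling_remainder_identity hy hz hs hsκ i

end Algebra

theorem forward_coupling_observable_PDE_general
    (κ : ℝ) (hκ : 4 < κ) (N : ℕ)
    (hκ' χ : ℝ) (hh : hκ' = (6 - κ) / (2 * κ))
    (hχ : χ = Real.sqrt κ / 2 - 2 / Real.sqrt κ)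
    (Z : (Fin N → ℝ) → ℝ)
    (hZ : ∀ y : Fin N → ℝ,
      Z y = ∏ i : Fin N, ∏ j ∈ Finset.univ.filter (fun j => i < j),
        |y i - y j| ^ (2 / κ))
    (u : ℂ → (Fin N → ℝ) → ℂ)
    (hu : ∀ (z : ℂ) (y : Fin N → ℝ),
      u z y = (2 / (Real.sqrt κ : ℂ)) * ∑ j : Fin N, Complex.log (z - (y j : ℂ)))
    (X : ℂ → (Fin N → ℝ) → ℂ)
    (hX : ∀ (z : ℂ) (y : Fin N → ℝ), X z y = u z y * (Z y : ℂ))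
    (i : Fin N) (z : ℂ) (hz : 0 < z.im)
    (x : Fin N → ℝ) (hx : ∀ i' j : Fin N, i' ≠ j → x i' ≠ x j) :
    ((κ : ℂ) / 2) * deriv (deriv (fun t : ℝ => X z (Function.update x i t))) (x i)
      + 2 * ∑ j ∈ Finset.univ.filter (fun j => j ≠ i),
          ((1 / ((x j : ℂ) - (x i : ℂ)))
              * deriv (fun t : ℝ => X z (Function.update x j t)) (x j)
            - (hκ' : ℂ) / ((x j : ℂ) - (x i : ℂ)) ^ 2 * X z x)
      + (2 / (z - (x i : ℂ))) * deriv (fun w => X w x) z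
      + (2 * (χ : ℂ) / (z - (x i : ℂ)) ^ 2) * (Z x : ℂ) = 0 := by
  obtain rfl : Z = vandermondeRpow (2 / κ) := funext hZ
  obtain rfl : u = fun z => logPotential (2 / Real.sqrt κ) z := funext fun z => funext (hu z)
  obtain rfl : X = couplingObservable (2 / Real.sqrt κ) (2 / κ) := funext fun z => funext (hX z)
  subst hh hχ
  have hz' : z.im ≠ 0 := hz.ne'
  have hinj : Injective x := fun a b => not_imp_not.1 (hx a b)
  simp only [deriv_deriv_couplingObservable_update hz' hinj,
    deriv_couplingObservable_update hz' hinj, (hasDerivAt_couplingObservable hz' x).deriv]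
  simp only [couplingObservable]
  push_cast
  have hκ0 : 0 < κ := by linarith
  exact forward_coupling_algebraic_identity (Complex.ofReal_injective.comp hinj)
    (fun j => Complex.slitPlane_ne_zero (sub_ofReal_mem_slitPlane hz' (x j)))
    (by exact_mod_cast (Real.sqrt_pos.2 hκ0).ne') (by norm_cast; exact Real.sq_sqrt hκ0.le) _ _ i

/-- Forward-flow coupling identity in the regime `κ > 4`: with
`Z(x) = ∏_{i<j} |x_i-x_j|^{2/κ}`, `ũ(z;x) = (2/√κ) ∑ⱼ Log(z-xⱼ)`,
`X = ũZ`, `h_κ = (6-κ)/(2κ)` and `χ = √κ/2 - 2/√κ`, one has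
`(D_{z,i}^κ X)(z;x) + (2χ/(z-x_i)²) Z(x) = 0` for every `i`, every `z` in
the upper half-plane and every pairwise-distinct configuration `x`. -/
theorem forward_coupling_observable_PDE
    (κ : ℝ) (hκ : 4 < κ) (N : ℕ) (hN : 2 ≤ N)
    (hκ' χ : ℝ) (hh : hκ' = (6 - κ) / (2 * κ))
    (hχ : χ = Real.sqrt κ / 2 - 2 / Real.sqrt κ)
    (Z : (Fin N → ℝ) → ℝ)
    (hZ : ∀ y : Fin N → ℝ,
      Z y = ∏ i : Fin N, ∏ j ∈ Finset.univ.filter (fun j => i < j),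
        |y i - y j| ^ (2 / κ))
    (u : ℂ → (Fin N → ℝ) → ℂ)
    (hu : ∀ (z : ℂ) (y : Fin N → ℝ),
      u z y = (2 / (Real.sqrt κ : ℂ)) * ∑ j : Fin N, Complex.log (z - (y j : ℂ)))
    (X : ℂ → (Fin N → ℝ) → ℂ)
    (hX : ∀ (z : ℂ) (y : Fin N → ℝ), X z y = u z y * (Z y : ℂ))
    (i : Fin N) (z : ℂ) (hz : 0 < z.im)
    (x : Fin N → ℝ) (hx : ∀ i' j : Fin N, i' ≠ j → x i' ≠ x j) :
    ((κ : ℂ) / 2) * deriv (deriv (fun t : ℝ => X z (Function.update x i t))) (x i)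
      + 2 * ∑ j ∈ Finset.univ.filter (fun j => j ≠ i),
          ((1 / ((x j : ℂ) - (x i : ℂ)))
              * deriv (fun t : ℝ => X z (Function.update x j t)) (x j)
            - (hκ' : ℂ) / ((x j : ℂ) - (x i : ℂ)) ^ 2 * X z x)
      + (2 / (z - (x i : ℂ))) * deriv (fun w => X w x) z
      + (2 * (χ : ℂ) / (z - (x i : ℂ)) ^ 2) * (Z x : ℂ) = 0 :=
  forward_coupling_observable_PDE_general κ hκ N hκ' χ hh hχ Z hZ u hu X hX i z hz x hx
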